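/- arXiv:1509.04990 — 5 statements merged into one kernel-verified Lean document; each statement's English description precedes it below -/
import Mathlib

section
/- Let f : (C^n,0) → (C^p,0) be a holomorphic map germ and let α be a p × n matrix of germs with f(x) - f(x') = α(x,x')·(x - x'). Then at any point (a,b) with a ≠ b, every n × n minor of α lies in the ideal generated by the components f_j(x) - f_j(x'), j = 1,…,p, in the local ring at (a,b). -/
/-!
Let `M` be the `n × n` submatrix of `α` on the chosen rows, so that `M (x - x')` is the vector of
the corresponding differences `f_j(x) - f_j(x')`. Multiplying by the adjugate (Cramer's rule) gives
`det M · (x_k - x'_k) = ∑ᵢ (adj M)_{k i} (f_{rows i}(x) - f_{rows i}(x'))` for every `k`. Since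
`a ≠ b`, some `x_k - x'_k` does not vanish at `(a, b)`, hence is a unit in the local ring there,
and dividing by it exhibits `det M` as a combination of the differences.
-/

open Filter Topology Function Matrix

theorem Matrix.det_mul_eq_sum_adjugate_mul_mulVec {m R : Type*} [Fintype m] [DecidableEq m]
    [CommRing R] (M : Matrix m m R) (v : m → R) (k : m) :
    M.det * v k = ∑ i, M.adjugate k i * (M *ᵥ v) i := by
  have h : M.adjugate *ᵥ (M *ᵥ v) = M.det • v := by
    rw [mulVec_mulVec, adjugate_mul, smul_mulVec, one_mulVec]
  exact (congrFun h k).symm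

theorem Function.Injective.sum_extend_zero_mul {ι κ R : Type*} [Fintype ι] [Fintype κ]
    [NonUnitalNonAssocSemiring R] {e : ι → κ} (he : Injective e) (c : ι → R) (y : κ → R) :
    ∑ j, extend e c 0 j * y j = ∑ i, c i * y (e i) :=
  (Fintype.sum_of_injective e he _ _ (fun j hj => by simp [extend_apply' _ _ _ hj])
    fun i => by rw [he.extend_apply]).symm

section Analytic

variable {𝕜 E : Type*} [NontriviallyNormedField 𝕜] [NormedAddCommGroup E] [NormedSpace 𝕜 E]
  {c : E}

theorem analyticAt_extend_zero {ι κ : Type*} {e : ι → κ} {G : ι → E → 𝕜}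
    (hG : ∀ i, AnalyticAt 𝕜 (G i) c) (j : κ) :
    AnalyticAt 𝕜 (fun w => extend e (fun i => G i w) 0 j) c := by
  classical
  simp only [extend_def]
  split_ifs
  exacts [hG _, analyticAt_const]

variable {m : Type*} [Fintype m] [DecidableEq m] {M : E → Matrix m m 𝕜}

theorem analyticAt_matrix_det (hM : ∀ i j, AnalyticAt 𝕜 (fun w => M w i j) c) :
    AnalyticAt 𝕜 (fun w => (M w).det) c := by
  simp only [Matrix.det_apply']
  exact Finset.analyticAt_fun_sum _ fun σ _ =>
    analyticAt_const.mul (Finset.analyticAt_fun_prod _ fun i _ => hM (σ i) i)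

theorem analyticAt_matrix_adjugate_apply (hM : ∀ i j, AnalyticAt 𝕜 (fun w => M w i j) c)
    (i j : m) : AnalyticAt 𝕜 (fun w => (M w).adjugate i j) c := by
  simp only [Matrix.adjugate_apply]
  refine analyticAt_matrix_det fun k l => ?_
  by_cases hk : k = j
  · subst hk
    simpa only [Matrix.updateRow_self] using analyticAt_const
  · simpa only [Matrix.updateRow_ne hk] using hM k l

end Analytic

theorem minors_mem_pullback_ideal_off_diagonal_general (n p : ℕ)
    (f : (Fin n → ℂ) → (Fin p → ℂ))
    (α : Fin p → Fin n → ((Fin n → ℂ) × (Fin n → ℂ)) → ℂ)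
    (a b : Fin n → ℂ) (hab : a ≠ b)
    (hα : ∀ j i, AnalyticAt ℂ (α j i) (a, b))
    (hrel : ∀ᶠ w : (Fin n → ℂ) × (Fin n → ℂ) in nhds (a, b),
      ∀ j, f w.1 j - f w.2 j = ∑ i, α j i w * (w.1 i - w.2 i)) :
    ∀ rows : Fin n → Fin p, StrictMono rows →
      ∃ g : Fin p → ((Fin n → ℂ) × (Fin n → ℂ)) → ℂ,
        (∀ j, AnalyticAt ℂ (g j) (a, b)) ∧
        ∀ᶠ w : (Fin n → ℂ) × (Fin n → ℂ) in nhds (a, b),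
          (Matrix.of fun i i' : Fin n => α (rows i) i' w).det
            = ∑ j, g j w * (f w.1 j - f w.2 j) := by
  intro rows hrows
  obtain ⟨k, hk⟩ : ∃ k, a k ≠ b k := ne_iff.mp hab
  set M := fun w : (Fin n → ℂ) × (Fin n → ℂ) => Matrix.of fun i i' : Fin n => α (rows i) i' w
  set d := fun w : (Fin n → ℂ) × (Fin n → ℂ) => (w.1 - w.2) k
  have hd : AnalyticAt ℂ d (a, b) :=
    ((analyticAt_pi_iff.mp analyticAt_fst) k).sub ((analyticAt_pi_iff.mp analyticAt_snd) k)
  have hd0 : d (a, b) ≠ 0 := sub_ne_zero.mpr hk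
  refine ⟨fun j w => extend rows (fun i => (M w).adjugate k i / d w) 0 j,
    analyticAt_extend_zero fun i =>
      (analyticAt_matrix_adjugate_apply (fun _ _ => hα _ _) k i).div hd hd0, ?_⟩
  filter_upwards [hrel, hd.continuousAt.eventually_ne hd0] with w hw hdw
  have hMv : M w *ᵥ (w.1 - w.2) = fun i => f w.1 (rows i) - f w.2 (rows i) :=
    funext fun i => (hw (rows i)).symm
  have hcramer := (M w).det_mul_eq_sum_adjugate_mul_mulVec (w.1 - w.2) k
  rw [hMv] at hcramer
  rw [hrows.injective.sum_extend_zero_mul]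
  simp_rw [div_mul_eq_mul_div, ← Finset.sum_div, ← hcramer]
  exact (mul_div_cancel_right₀ _ hdw).symm

/-- Let `f : (ℂⁿ,0) → (ℂᵖ,0)` be holomorphic, `p ≥ n`, and `α` a `p × n` matrix of germs
with `f(x) - f(x') = α(x,x')·(x - x')`. Then at any point `(a,b)` with `a ≠ b`, every
`n × n` minor of `α` lies in the ideal generated by the components `fⱼ(x) - fⱼ(x')` in
the local ring of holomorphic germs at `(a,b)`: it is a combination of them with
holomorphic coefficients, on a neighbourhood of `(a,b)`. -/
theorem minors_mem_pullback_ideal_off_diagonal (n p : ℕ) (hnp : n ≤ p)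
    (f : (Fin n → ℂ) → (Fin p → ℂ))
    (α : Fin p → Fin n → ((Fin n → ℂ) × (Fin n → ℂ)) → ℂ)
    (a b : Fin n → ℂ) (hab : a ≠ b)
    (hf : AnalyticAt ℂ f a) (hf' : AnalyticAt ℂ f b)
    (hα : ∀ j i, AnalyticAt ℂ (α j i) (a, b))
    (hrel : ∀ᶠ w : (Fin n → ℂ) × (Fin n → ℂ) in nhds (a, b),
      ∀ j, f w.1 j - f w.2 j = ∑ i, α j i w * (w.1 i - w.2 i)) :
    ∀ rows : Fin n → Fin p, StrictMono rows →
      ∃ g : Fin p → ((Fin n → ℂ) × (Fin n → ℂ)) → ℂ,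
        (∀ j, AnalyticAt ℂ (g j) (a, b)) ∧
        ∀ᶠ w : (Fin n → ℂ) × (Fin n → ℂ) in nhds (a, b),
          (Matrix.of fun i i' : Fin n => α (rows i) i' w).det
            = ∑ j, g j w * (f w.1 j - f w.2 j) :=
  minors_mem_pullback_ideal_off_diagonal_general n p f α a b hab hα hrel
end

section
/- Let R be a Noetherian ring, I, J ideals of R, and I = q_1 ∩ … ∩ q_s a minimal primary decomposition. Then every associated prime of R/(I : J) belongs to the set {√q_i : J ⊄ q_i}. -/
/-- Let `R` be a Noetherian ring, `I`, `J` ideals, and `I = q₁ ∩ … ∩ q_s` a minimal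
primary decomposition. Then every associated prime of `R/(I : J)` belongs to
`{√qᵢ : J ⊄ qᵢ}`. -/
theorem associatedPrimes_colon_subset (R : Type*) [CommRing R] [IsNoetherianRing R]
    (I J : Ideal R) (s : ℕ) (q : Fin s → Ideal R)
    (hdecomp : I = ⨅ i, q i)
    (hprimary : ∀ i, (q i).IsPrimary)
    (hdistinct : Function.Injective fun i => (q i).radical)
    (hminimal : ∀ i, ¬ (⨅ j ∈ ({i}ᶜ : Finset (Fin s)), q j) ≤ q i) :
    ∀ P ∈ associatedPrimes R (R ⧸ (I.colon J)),
      ∃ i, ¬ J ≤ q i ∧ P = (q i).radical := by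
  intro P hP'
  obtain ⟨hP, x, hx⟩ := isAssociatedPrime_iff.mp hP'
  obtain ⟨a, rfl⟩ := Ideal.Quotient.mk_surjective x
  set K := I.colon J with hK
  -- P = (K : a)
  have hPa : P = K.colon (Ideal.span {a}) := by
    rw [hx]
    ext r
    rw [Submodule.mem_colon_singleton, Submodule.mem_bot, Ideal.mem_colon_span_singleton]
    have : r • (Ideal.Quotient.mk K) a = Ideal.Quotient.mk K (r * a) := rfl
    rw [this, Ideal.Quotient.eq_zero_iff_mem]
  set c : Fin s → Ideal R := fun i => ((q i).colon J).colon (Ideal.span {a}) with hc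
  have hPinf : P = ⨅ i, c i := by
    rw [hPa]
    ext r
    simp only [Ideal.mem_colon_span_singleton, hK, Submodule.mem_colon, hdecomp, Submodule.mem_iInf,
      Submodule.mem_inf, hc, Ideal.mem_iInf]
    tauto
  -- P contains some factor
  have hle : (Finset.univ : Finset (Fin s)).inf c ≤ P := by
    rw [Finset.inf_eq_iInf]
    simp only [Finset.mem_univ, iInf_true]
    rw [hPinf]
  obtain ⟨i, -, hi⟩ := hP.inf_le'.mp hle
  have hPc : P = c i := le_antisymm (hPinf ▸ iInf_le c i) hi
  -- J ⊄ q i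
  have hJ : ¬ J ≤ q i := by
    intro hJq
    have : c i = ⊤ := by
      rw [eq_top_iff]
      intro r _
      simp only [hc]
      rw [Ideal.mem_colon_span_singleton, Submodule.mem_colon]
      intro p hp
      rw [smul_eq_mul]
      exact (q i).mul_mem_left _ (hJq hp)
    exact hP.ne_top (hPc.trans this)
  -- there is j ∈ J with a * j ∉ q i
  have hwit : ∃ j ∈ J, a * j ∉ q i := by
    by_contra h
    push_neg at h
    apply hP.ne_top
    rw [hPc, eq_top_iff]
    intro r _
    simp only [hc]
    rw [Ideal.mem_colon_span_singleton, Submodule.mem_colon]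
    intro p hp
    rw [smul_eq_mul, mul_assoc]
    exact (q i).mul_mem_left r (h p hp)
  obtain ⟨j, hjJ, hj⟩ := hwit
  refine ⟨i, hJ, ?_⟩
  -- radical computation
  have h1 : c i ≤ (q i).radical := by
    intro r hr
    simp only [hc] at hr
    rw [Ideal.mem_colon_span_singleton, Submodule.mem_colon] at hr
    have := hr j hjJ
    rw [smul_eq_mul, mul_assoc, mul_comm r (a * j)] at this
    rcases (Ideal.isPrimary_iff.mp (hprimary i)).2 this with h | h
    · exact absurd h hj
    · exact h
  have h2 : q i ≤ c i := by
    intro r hr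
    simp only [hc]
    rw [Ideal.mem_colon_span_singleton, Submodule.mem_colon]
    intro p _
    rw [smul_eq_mul]
    exact (q i).mul_mem_right _ ((q i).mul_mem_right _ hr)
  have : P.radical = (q i).radical := by
    rw [hPc]
    refine le_antisymm ?_ ?_
    · rw [← Ideal.radical_idem (q i)]
      exact Ideal.radical_mono h1
    · exact Ideal.radical_mono h2
  rw [← this, hP.radical]
end

section
/- The inclusion of the previous lemma can be strict: in R = C[x,y,z] (or a polynomial ring over a field), with q_1 = (x², y²), q_2 = (x², xy², y³, z), I = q_1 ∩ q_2, and J = (x,y), the ideals q_1, q_2 are primary with distinct radicals (x,y) and (x,y,z), J ⊄ q_2, yet the only associated prime of R/(I : J) is (x,y). -/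
/-!
Over a domain `A`, an ideal of `A[x₁, …, xₙ]` that is spanned by monomials and contains a power
of `(x₁, …, xₙ)` is primary: if `a * b` lies in it and `b` has a nonzero constant term, then the
lowest monomial of `a` outside the ideal survives in `a * b`. Reading `k[x, y, z]` as
`k[z][x, y]`, this makes `q₁` and `(x, y)²` primary with radical `(x, y)`; read directly in
`k[x, y, z]`, it makes `q₂` primary with radical `(x, y, z)`. Finally `I : J = (x, y)²`: one
inclusion because `(x, y)³ ⊆ q₁ ∩ q₂`, the other because already `q₁ : (x, y) ⊆ (x, y)²`, which
is a comparison of exponents.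
-/

open MvPolynomial

namespace MvPolynomial

section General

variable {σ R : Type*} [CommSemiring R]

theorem mem_restrictSupportIdeal_iff {s : Set (σ →₀ ℕ)} {hs : IsUpperSet s}
    {p : MvPolynomial σ R} : p ∈ restrictSupportIdeal R s hs ↔ ↑p.support ⊆ s :=
  mem_restrictSupport_iff R

theorem span_monomial_eq_restrictSupportIdeal (G : Set (σ →₀ ℕ)) :
    Ideal.span ((monomial · (1 : R)) '' G) =
      restrictSupportIdeal R (upperClosure G) (upperClosure G).upper := by
  ext p
  rw [mem_ideal_span_monomial_image, mem_restrictSupportIdeal_iff]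
  simp [Set.subset_def, mem_upperClosure]

theorem mem_idealOfVars_iff {p : MvPolynomial σ R} :
    p ∈ idealOfVars σ R ↔ constantCoeff p = 0 := by
  rw [← pow_one (idealOfVars σ R), mem_pow_idealOfVars_iff', constantCoeff_eq]
  simp [Finsupp.degree_eq_zero_iff]

theorem restrictSupportIdeal_le_idealOfVars {s : Set (σ →₀ ℕ)} {hs : IsUpperSet s}
    (h0 : 0 ∉ s) :
    restrictSupportIdeal R s hs ≤ idealOfVars σ R := fun p hp => by
  rw [mem_idealOfVars_iff, constantCoeff_eq, ← notMem_support_iff]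
  exact fun h => h0 (mem_restrictSupportIdeal_iff.mp hp h)

theorem idealOfVars_eq_ker :
    idealOfVars σ R = RingHom.ker (constantCoeff : MvPolynomial σ R →+* R) :=
  Ideal.ext fun _ => mem_idealOfVars_iff

end General

section Domain

variable {σ A : Type*} [CommRing A]

variable [IsDomain A]

theorem isPrime_idealOfVars : (idealOfVars σ A).IsPrime := by
  rw [idealOfVars_eq_ker]
  exact RingHom.ker_isPrime _

variable {s : Set (σ →₀ ℕ)} (hs : IsUpperSet s)

theorem mem_restrictSupportIdeal_of_mul_mem {a b : MvPolynomial σ A} (hb : constantCoeff b ≠ 0)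
    (hab : a * b ∈ restrictSupportIdeal A s hs) : a ∈ restrictSupportIdeal A s hs := by
  classical
  suffices key : ∀ m, m ∉ s → coeff m a = 0 from
    mem_restrictSupportIdeal_iff.mpr fun m hm => by_contra fun h => mem_support_iff.mp hm (key m h)
  intro m
  induction m using WellFoundedLT.induction with
  | _ m ih =>
    intro hm
    have hcoeff : coeff m (a * b) = coeff m a * constantCoeff b := by
      rw [coeff_mul, Finset.sum_eq_single (m, 0)]
      · rw [constantCoeff_eq]
      · rintro ⟨u, v⟩ huv hne
        rw [Finset.HasAntidiagonal.mem_antidiagonal] at huv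
        have hu : u < m := lt_of_le_of_ne (huv ▸ le_self_add) (by rintro rfl; simp_all)
        rw [ih u hu fun h => hm (hs hu.le h), zero_mul]
      · simp
    have hzero : coeff m (a * b) = 0 :=
      by_contra fun h => hm (mem_restrictSupportIdeal_iff.mp hab (mem_support_iff.mpr h))
    exact (mul_eq_zero.mp (hcoeff ▸ hzero)).resolve_right hb

variable {hs} {n : ℕ}

theorem radical_restrictSupportIdeal (h0 : 0 ∉ s) (hn : n ≠ 0)
    (hpow : idealOfVars σ A ^ n ≤ restrictSupportIdeal A s hs) :
    (restrictSupportIdeal A s hs).radical = idealOfVars σ A := by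
  have := isPrime_idealOfVars (σ := σ) (A := A)
  refine le_antisymm ?_ ?_
  · exact (Ideal.radical_mono (restrictSupportIdeal_le_idealOfVars h0)).trans_eq this.radical
  · rw [← this.radical, ← (idealOfVars σ A).radical_pow hn]
    exact Ideal.radical_mono hpow

theorem isPrimary_restrictSupportIdeal (h0 : 0 ∉ s) (hn : n ≠ 0)
    (hpow : idealOfVars σ A ^ n ≤ restrictSupportIdeal A s hs) :
    (restrictSupportIdeal A s hs).IsPrimary := by
  refine Ideal.isPrimary_iff.mpr ⟨fun htop => h0 ?_, fun {a b} hab => ?_⟩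
  · exact mem_restrictSupportIdeal_iff.mp (htop ▸ Submodule.mem_top : (1 : MvPolynomial σ A) ∈ _)
      (by simp)
  · by_cases hb : constantCoeff b = 0
    · rw [radical_restrictSupportIdeal h0 hn hpow]
      exact Or.inr (mem_idealOfVars_iff.mpr hb)
    · exact Or.inl (mem_restrictSupportIdeal_of_mul_mem hs hb hab)

theorem isPrimary_pow_idealOfVars (hn : n ≠ 0) : (idealOfVars σ A ^ n).IsPrimary := by
  rw [pow_idealOfVars]
  exact isPrimary_restrictSupportIdeal (by simpa using hn) hn (pow_idealOfVars n).le

end Domain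

section Monomial

variable {σ A : Type*} [CommRing A] {G : Set (σ →₀ ℕ)} {n : ℕ}

theorem mul_X_mem_span_monomial_iff {p : MvPolynomial σ A} {i : σ} :
    p * X i ∈ Ideal.span ((monomial · (1 : A)) '' G) ↔
      ∀ m ∈ p.support, ∃ g ∈ G, g ≤ m + Finsupp.single i 1 := by
  classical
  rw [mem_ideal_span_monomial_image, support_mul_X]
  simp

theorem pow_idealOfVars_le_span_monomial (h : ∀ m : σ →₀ ℕ, n ≤ m.degree → ∃ g ∈ G, g ≤ m) :
    idealOfVars σ A ^ n ≤ Ideal.span ((monomial · (1 : A)) '' G) := fun p hp =>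
  mem_ideal_span_monomial_image.mpr fun m hm => h m ((mem_pow_idealOfVars_iff n p).mp hp m hm)

variable [IsDomain A]

theorem radical_span_monomial (h0 : 0 ∉ G) (hn : n ≠ 0)
    (hpow : idealOfVars σ A ^ n ≤ Ideal.span ((monomial · (1 : A)) '' G)) :
    (Ideal.span ((monomial · (1 : A)) '' G)).radical = idealOfVars σ A := by
  rw [span_monomial_eq_restrictSupportIdeal] at hpow ⊢
  exact radical_restrictSupportIdeal (by simpa [mem_upperClosure]) hn hpow

theorem isPrimary_span_monomial (h0 : 0 ∉ G) (hn : n ≠ 0)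
    (hpow : idealOfVars σ A ^ n ≤ Ideal.span ((monomial · (1 : A)) '' G)) :
    (Ideal.span ((monomial · (1 : A)) '' G)).IsPrimary := by
  rw [span_monomial_eq_restrictSupportIdeal] at hpow ⊢
  exact isPrimary_restrictSupportIdeal (by simpa [mem_upperClosure]) hn hpow

end Monomial

variable (R : Type*) [CommSemiring R] (n : ℕ)

noncomputable def lastVarToCoeffEquiv :
    MvPolynomial (Fin (n + 1)) R ≃ₐ[R] MvPolynomial (Fin n) (Polynomial R) :=
  (renameEquiv R finSuccEquivLast).trans (optionEquivRight R (Fin n))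

variable {R n}

@[simp]
theorem lastVarToCoeffEquiv_X_castSucc (i : Fin n) :
    lastVarToCoeffEquiv R n (X i.castSucc) = X i := by
  simp [lastVarToCoeffEquiv, finSuccEquivLast_castSucc]

@[simp]
theorem lastVarToCoeffEquiv_X_last :
    lastVarToCoeffEquiv R n (X (Fin.last n)) = C Polynomial.X := by
  simp [lastVarToCoeffEquiv]

@[simp]
theorem lastVarToCoeffEquiv_symm_X (i : Fin n) :
    (lastVarToCoeffEquiv R n).symm (X i) = X i.castSucc := by
  rw [AlgEquiv.symm_apply_eq, lastVarToCoeffEquiv_X_castSucc]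

theorem comap_lastVarToCoeffEquiv_span (T : Set (MvPolynomial (Fin n) (Polynomial R))) :
    (Ideal.span T).comap (lastVarToCoeffEquiv R n) =
      Ideal.span ((lastVarToCoeffEquiv R n).symm '' T) := by
  rw [← Ideal.map_span]
  exact (Ideal.map_symm (lastVarToCoeffEquiv R n).toRingEquiv).symm

end MvPolynomial

namespace ColonExample

open Finsupp (single)

section Plane

variable {A : Type*} [CommRing A]

theorem span_X_sq_eq_span_monomial :
    (Ideal.span {X 0 ^ 2, X 1 ^ 2} : Ideal (MvPolynomial (Fin 2) A)) =
      Ideal.span ((monomial · 1) '' {single 0 2, single 1 2}) := by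
  simp [Set.image_insert_eq, X_pow_eq_monomial]

theorem pow_three_le_span_X_sq :
    idealOfVars (Fin 2) A ^ 3 ≤ Ideal.span {X 0 ^ 2, X 1 ^ 2} := by
  rw [span_X_sq_eq_span_monomial]
  refine pow_idealOfVars_le_span_monomial fun m hm => ?_
  simp only [Finsupp.degree_eq_sum, Fin.sum_univ_two] at hm
  simp [Finsupp.single_le_iff]
  omega

theorem mem_sq_of_mul_X_mem_span_X_sq {f : MvPolynomial (Fin 2) A}
    (h0 : f * X 0 ∈ Ideal.span {X 0 ^ 2, X 1 ^ 2})
    (h1 : f * X 1 ∈ Ideal.span {X 0 ^ 2, X 1 ^ 2}) : f ∈ idealOfVars (Fin 2) A ^ 2 := by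
  rw [span_X_sq_eq_span_monomial, mul_X_mem_span_monomial_iff] at h0 h1
  refine (mem_pow_idealOfVars_iff 2 f).mpr fun m hm => ?_
  have h0 := h0 m hm
  have h1 := h1 m hm
  simp [Finsupp.single_le_iff] at h0 h1
  simp only [Finsupp.degree_eq_sum, Fin.sum_univ_two]
  omega

variable [IsDomain A]

theorem radical_span_X_sq :
    (Ideal.span {X 0 ^ 2, X 1 ^ 2} : Ideal (MvPolynomial (Fin 2) A)).radical =
      idealOfVars (Fin 2) A := by
  have hpow := pow_three_le_span_X_sq (A := A)
  rw [span_X_sq_eq_span_monomial] at hpow ⊢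
  exact radical_span_monomial (by simp [Finsupp.ext_iff]) three_ne_zero hpow

theorem isPrimary_span_X_sq :
    (Ideal.span {X 0 ^ 2, X 1 ^ 2} : Ideal (MvPolynomial (Fin 2) A)).IsPrimary := by
  have hpow := pow_three_le_span_X_sq (A := A)
  rw [span_X_sq_eq_span_monomial] at hpow ⊢
  exact isPrimary_span_monomial (by simp [Finsupp.ext_iff]) three_ne_zero hpow

end Plane

variable (k : Type*) [CommRing k]

noncomputable abbrev q₁ : Ideal (MvPolynomial (Fin 3) k) := Ideal.span {X 0 ^ 2, X 1 ^ 2}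

noncomputable abbrev q₂ : Ideal (MvPolynomial (Fin 3) k) :=
  Ideal.span {X 0 ^ 2, X 0 * X 1 ^ 2, X 1 ^ 3, X 2}

noncomputable abbrev J : Ideal (MvPolynomial (Fin 3) k) := Ideal.span {X 0, X 1}

variable {k}

theorem idealOfVars_fin_two : idealOfVars (Fin 2) k = Ideal.span {X 0, X 1} := by
  rw [idealOfVars]
  congr 1
  ext p
  simp [Fin.exists_fin_two, eq_comm]

theorem idealOfVars_fin_three : idealOfVars (Fin 3) k = Ideal.span {X 0, X 1, X 2} := by
  rw [idealOfVars]
  congr 1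
  ext p
  simp [Fin.exists_fin_succ, eq_comm]

theorem J_eq_comap :
    J k = (idealOfVars (Fin 2) (Polynomial k)).comap (lastVarToCoeffEquiv k 2) := by
  rw [idealOfVars_fin_two, comap_lastVarToCoeffEquiv_span]
  simp [Set.image_insert_eq]

theorem J_pow_eq_comap (n : ℕ) :
    J k ^ n = (idealOfVars (Fin 2) (Polynomial k) ^ n).comap (lastVarToCoeffEquiv k 2) := by
  rw [J_eq_comap]
  change Ideal.comap (lastVarToCoeffEquiv k 2).toRingEquiv _ ^ n =
    Ideal.comap (lastVarToCoeffEquiv k 2).toRingEquiv _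
  rw [← Ideal.map_symm, ← Ideal.map_symm, Ideal.map_pow]

theorem q₁_eq_comap :
    q₁ k = (Ideal.span {X 0 ^ 2, X 1 ^ 2}).comap (lastVarToCoeffEquiv k 2) := by
  rw [comap_lastVarToCoeffEquiv_span]
  simp [Set.image_insert_eq]

theorem q₂_eq_span_monomial :
    q₂ k = Ideal.span ((monomial · 1) ''
      {single 0 2, single 0 1 + single 1 2, single 1 3, single 2 1}) := by
  simp only [q₂, Set.image_insert_eq, Set.image_singleton, X_pow_eq_monomial]
  simp only [X, monomial_mul, one_mul]

theorem pow_three_le_q₂ : idealOfVars (Fin 3) k ^ 3 ≤ q₂ k := by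
  rw [q₂_eq_span_monomial]
  refine pow_idealOfVars_le_span_monomial fun m hm => ?_
  simp only [Finsupp.degree_eq_sum, Fin.sum_univ_three] at hm
  simp [Finsupp.le_def, Fin.forall_fin_succ, Fin.succ_zero_eq_one, Fin.succ_one_eq_two]
  omega

theorem J_pow_three_le_q₁ : J k ^ 3 ≤ q₁ k := by
  rw [J_pow_eq_comap, q₁_eq_comap]
  exact Ideal.comap_mono pow_three_le_span_X_sq

theorem J_le_idealOfVars : J k ≤ idealOfVars (Fin 3) k := by
  rw [idealOfVars_fin_three]
  exact Ideal.span_mono (by simp [Set.insert_subset_iff])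

theorem J_pow_three_le_q₂ : J k ^ 3 ≤ q₂ k :=
  (Ideal.pow_right_mono J_le_idealOfVars 3).trans pow_three_le_q₂

variable [IsDomain k]

theorem isPrime_J : (J k).IsPrime := by
  rw [J_eq_comap]
  have := isPrime_idealOfVars (σ := Fin 2) (A := Polynomial k)
  exact Ideal.comap_isPrime _ _

theorem isPrimary_q₁ : (q₁ k).IsPrimary := by
  rw [q₁_eq_comap]
  exact isPrimary_span_X_sq.comap (lastVarToCoeffEquiv k 2).toRingHom

theorem radical_q₁ : (q₁ k).radical = J k := by
  rw [q₁_eq_comap, ← Ideal.comap_radical, radical_span_X_sq, J_eq_comap]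

theorem radical_q₂ : (q₂ k).radical = Ideal.span {X 0, X 1, X 2} := by
  have hpow := pow_three_le_q₂ (k := k)
  rw [← idealOfVars_fin_three, q₂_eq_span_monomial] at *
  exact radical_span_monomial (by simp [Finsupp.ext_iff, Fin.exists_fin_succ]) three_ne_zero hpow

theorem isPrimary_q₂ : (q₂ k).IsPrimary := by
  have hpow := pow_three_le_q₂ (k := k)
  rw [q₂_eq_span_monomial] at *
  exact isPrimary_span_monomial (by simp [Finsupp.ext_iff, Fin.exists_fin_succ]) three_ne_zero hpow

theorem X_one_notMem_q₂ : (X 1 : MvPolynomial (Fin 3) k) ∉ q₂ k := by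
  rw [q₂_eq_span_monomial]
  intro h
  obtain ⟨g, hg, hle⟩ := mem_ideal_span_monomial_image.mp h (single 1 1) (by simp [support_X])
  rcases hg with rfl | rfl | rfl | rfl <;> simp [Finsupp.le_def, Fin.forall_fin_succ] at hle

theorem X_two_notMem_J : (X 2 : MvPolynomial (Fin 3) k) ∉ J k := by
  rw [J_eq_comap, Ideal.mem_comap, mem_idealOfVars_iff, show (2 : Fin 3) = Fin.last 2 from rfl,
    lastVarToCoeffEquiv_X_last, constantCoeff_C]
  exact Polynomial.X_ne_zero

theorem isPrimary_J_sq : (J k ^ 2).IsPrimary := by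
  rw [J_pow_eq_comap]
  exact (isPrimary_pow_idealOfVars two_ne_zero).comap (lastVarToCoeffEquiv k 2).toRingHom

theorem radical_J_sq : (J k ^ 2).radical = J k := by
  rw [(J k).radical_pow two_ne_zero, isPrime_J.radical]

theorem colon_eq_J_sq : (q₁ k ⊓ q₂ k).colon (J k) = J k ^ 2 := by
  refine le_antisymm (fun f hf => ?_) (fun f hf => Submodule.mem_colon.mpr fun g hg => ?_)
  · rw [J, Submodule.colon_span, Submodule.mem_colon] at hf
    have hmul : ∀ i : Fin 2,
        lastVarToCoeffEquiv k 2 f * X i ∈ Ideal.span {X 0 ^ 2, X 1 ^ 2} := fun i => by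
      have : f * X i.castSucc ∈ q₁ k := (hf (X i.castSucc) (by fin_cases i <;> simp)).1
      rwa [q₁_eq_comap, Ideal.mem_comap, map_mul, lastVarToCoeffEquiv_X_castSucc] at this
    rw [J_pow_eq_comap, Ideal.mem_comap]
    exact mem_sq_of_mul_X_mem_span_X_sq (hmul 0) (hmul 1)
  · have hfg : f * g ∈ J k ^ 3 := pow_succ (J k) 2 ▸ Ideal.mul_mem_mul hf hg
    exact ⟨J_pow_three_le_q₁ hfg, J_pow_three_le_q₂ hfg⟩

end ColonExample

/-- In `R = ℂ[x,y,z]`, with `q₁ = (x², y²)`, `q₂ = (x², xy², y³, z)`, `I = q₁ ∩ q₂`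
and `J = (x,y)`: the ideals `q₁`, `q₂` are primary with distinct radicals `(x,y)` and
`(x,y,z)`, `J ⊄ q₂`, yet the only associated prime of `R/(I : J)` is `(x,y)`.
(So the inclusion of the previous lemma can be strict.) -/
theorem associatedPrimes_colon_strict_example :
    ∀ (q₁ q₂ I J : Ideal (MvPolynomial (Fin 3) ℂ)),
    q₁ = Ideal.span {X 0 ^ 2, X 1 ^ 2} →
    q₂ = Ideal.span {X 0 ^ 2, X 0 * X 1 ^ 2, X 1 ^ 3, X 2} →
    I = q₁ ⊓ q₂ →
    J = Ideal.span {X 0, X 1} →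
    q₁.IsPrimary ∧ q₂.IsPrimary ∧
    q₁.radical = Ideal.span {X 0, X 1} ∧
    q₂.radical = Ideal.span {X 0, X 1, X 2} ∧
    q₁.radical ≠ q₂.radical ∧
    ¬ J ≤ q₂ ∧
    associatedPrimes (MvPolynomial (Fin 3) ℂ) ((MvPolynomial (Fin 3) ℂ) ⧸ (I.colon J))
      = {Ideal.span {X 0, X 1}} := by
  intro q₁ q₂ I J h₁ h₂ hI hJ
  subst h₁ h₂ hI hJ
  refine ⟨ColonExample.isPrimary_q₁, ColonExample.isPrimary_q₂, ColonExample.radical_q₁,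
    ColonExample.radical_q₂, ?_, ?_, ?_⟩
  · rw [ColonExample.radical_q₁, ColonExample.radical_q₂]
    exact fun h => ColonExample.X_two_notMem_J (h ▸ Ideal.subset_span (by simp))
  · exact fun h => ColonExample.X_one_notMem_q₂ (h (Ideal.subset_span (by simp)))
  · rw [ColonExample.colon_eq_J_sq, associatedPrimes.eq_singleton_of_isPrimary
      ColonExample.isPrimary_J_sq, ColonExample.radical_J_sq]
end

section
/- Let f : (C^n,0) → (C^p,0) be a finite holomorphic map germ with corank f = k ≥ 2 and n ≤ p. Then the embedding dimension of the double point space D^2(f) = V(I^2(f)) is n + k. -/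
open Filter Topology

/-- The local ring of germs at `z` of complex-analytic functions, as a subring of the
ring of germs of all functions at `z`. -/
noncomputable def analyticGerms (E : Type*) [NormedAddCommGroup E] [NormedSpace ℂ E]
    (z : E) : Subring (Filter.Germ (nhds z) ℂ) where
  carrier := {γ | ∃ g : E → ℂ, AnalyticAt ℂ g z ∧ γ = (g : Filter.Germ (nhds z) ℂ)}
  mul_mem' := by rintro a b ⟨g, hg, rfl⟩ ⟨h, hh, rfl⟩; exact ⟨g * h, hg.mul hh, rfl⟩
  one_mem' := ⟨1, analyticAt_const, rfl⟩
  add_mem' := by rintro a b ⟨g, hg, rfl⟩ ⟨h, hh, rfl⟩; exact ⟨g + h, hg.add hh, rfl⟩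
  zero_mem' := ⟨0, analyticAt_const, rfl⟩
  neg_mem' := by rintro a ⟨g, hg, rfl⟩; exact ⟨-g, hg.neg, rfl⟩

/-- Mond's double point ideal `I²(f)` in the local ring `O_{2n}` of holomorphic germs at
the origin of `ℂⁿ × ℂⁿ`, formed from a matrix `α` with `f(x)-f(x') = α(x,x')(x-x')`:
it is generated by the germs of the components `fⱼ(x) - fⱼ(x')` together with the
`n × n` minors of `α`. -/
noncomputable def mondDoubleIdeal (n p : ℕ) (f : (Fin n → ℂ) → (Fin p → ℂ))
    (α : Fin p → Fin n → ((Fin n → ℂ) × (Fin n → ℂ)) → ℂ) :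
    Ideal (analyticGerms ((Fin n → ℂ) × (Fin n → ℂ)) (0, 0)) :=
  Ideal.span
    ({γ | ∃ j : Fin p, (γ : Filter.Germ (nhds ((0, 0) : (Fin n → ℂ) × (Fin n → ℂ))) ℂ)
          = ((fun w : (Fin n → ℂ) × (Fin n → ℂ) => f w.1 j - f w.2 j) : Filter.Germ (nhds ((0, 0) : (Fin n → ℂ) × (Fin n → ℂ))) ℂ)}
      ∪ {γ | ∃ rows : Fin n → Fin p, StrictMono rows ∧
          (γ : Filter.Germ (nhds ((0, 0) : (Fin n → ℂ) × (Fin n → ℂ))) ℂ)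
          = ((fun w : (Fin n → ℂ) × (Fin n → ℂ) => (Matrix.of fun i i' : Fin n => α (rows i) i' w).det) :
              Filter.Germ (nhds ((0, 0) : (Fin n → ℂ) × (Fin n → ℂ))) ℂ)})


/-- The space of linear parts at the origin of the elements of an ideal `I` of the ring
`O_{2n}` of analytic germs: the span of the differentials at the base point of analytic
representatives of members of `I`. The embedding dimension of `V(I)` is `2n` minus its
dimension. -/
noncomputable def linearParts (n : ℕ)
    (I : Ideal (analyticGerms ((Fin n → ℂ) × (Fin n → ℂ)) (0, 0))) :
    Submodule ℂ (((Fin n → ℂ) × (Fin n → ℂ)) →L[ℂ] ℂ) :=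
  Submodule.span ℂ {L | ∃ γ ∈ I, ∃ g : ((Fin n → ℂ) × (Fin n → ℂ)) → ℂ,
    AnalyticAt ℂ g (0, 0) ∧
    (γ : Filter.Germ (nhds ((0, 0) : (Fin n → ℂ) × (Fin n → ℂ))) ℂ)
      = (g : Filter.Germ (nhds ((0, 0) : (Fin n → ℂ) × (Fin n → ℂ))) ℂ) ∧
    L = fderiv ℂ g (0, 0)}

/-! The differential at the origin of `fⱼ(x) - fⱼ(x')` is `(v, v') ↦ dfⱼ(0)(v - v')`, so these
generators contribute a space of linear forms isomorphic to the row space of `df(0)`, of dimension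
`n - k`. Differentiating `f(x) - f(x') = α(x, x')(x - x')` at the origin shows `α(0, 0) = df(0)`.
By multilinearity, the differential of an `n × n` minor of `α` at the origin is a sum of
determinants having `n - 1` rows from `α(0, 0)`; as `rank α(0, 0) = n - k ≤ n - 2`, these vanish,
as does the minor itself. So the linear parts of `I²(f)` form a space of dimension `n - k`, and
the embedding dimension is `2n - (n - k) = n + k`. -/

open Module

namespace Matrix

variable {K ι : Type*} [Field K] [Fintype ι] [DecidableEq ι]

theorem det_eq_zero_of_forall_ne_mem (M : Matrix ι ι K) (W : Submodule K (ι → K)) (i : ι)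
    (hW : ∀ l ≠ i, M l ∈ W) (hd : finrank K W + 1 < Fintype.card ι) : M.det = 0 := by
  by_contra hdet
  have hspan : Submodule.span K (Set.range M.row) ≤ W ⊔ K ∙ M i := by
    refine Submodule.span_le.mpr ?_
    rintro _ ⟨l, rfl⟩
    rcases eq_or_ne l i with rfl | hl
    · exact Submodule.mem_sup_right (Submodule.mem_span_singleton_self _)
    · exact Submodule.mem_sup_left (hW l hl)
  have := calc Fintype.card ι = M.rank := (rank_of_det_ne_zero hdet).symm
    _ = finrank K (Submodule.span K (Set.range M.row)) := M.rank_eq_finrank_span_row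
    _ ≤ finrank K ↥(W ⊔ K ∙ M i) := Submodule.finrank_mono hspan
    _ ≤ finrank K W + finrank K (K ∙ M i) := Submodule.finrank_add_le_finrank_add_finrank _ _
    _ ≤ finrank K W + 1 := by gcongr; simpa using finrank_span_le_card ({M i} : Set (ι → K))
  omega

end Matrix

section Determinant

variable {𝕜 ι E : Type*} [NontriviallyNormedField 𝕜] [Fintype ι] [DecidableEq ι]
  [NormedAddCommGroup E] [NormedSpace 𝕜 E]

variable (𝕜 ι) in
noncomputable def Matrix.detRowContinuousAlternating : (ι → 𝕜) [⋀^ι]→L[𝕜] 𝕜 :=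
  { Matrix.detRowAlternating with cont := continuous_id.matrix_det }

theorem AnalyticAt.matrix_det_of {R : E → ι → ι → 𝕜} {x : E} (hR : AnalyticAt 𝕜 R x) :
    AnalyticAt 𝕜 (fun w => (Matrix.of (R w)).det) x :=
  (Matrix.detRowContinuousAlternating 𝕜 ι).toContinuousMultilinearMap.analyticAt.comp hR

theorem hasFDerivAt_matrix_det_zero_of_forall_mem {R : E → ι → ι → 𝕜} {x : E}
    (hR : DifferentiableAt 𝕜 R x) (W : Submodule 𝕜 (ι → 𝕜)) (hW : ∀ i, R x i ∈ W)
    (hd : finrank 𝕜 W + 2 ≤ Fintype.card ι) :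
    HasFDerivAt (fun w => (Matrix.of (R w)).det) (0 : E →L[𝕜] 𝕜) x := by
  have hD := ((Matrix.detRowContinuousAlternating 𝕜 ι).hasFDerivAt (R x)).comp x hR.hasFDerivAt
  refine hD.congr_fderiv (ContinuousLinearMap.ext fun v => ?_)
  rw [ContinuousLinearMap.comp_apply, ContinuousMultilinearMap.linearDeriv_apply]
  refine Finset.sum_eq_zero fun i _ => ?_
  refine Matrix.det_eq_zero_of_forall_ne_mem _ W i (fun l hl => ?_) (by omega)
  simpa [Function.update_of_ne hl] using hW l

end Determinant

section DoublePoints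

variable {𝕜 ι : Type*} [NontriviallyNormedField 𝕜] [Fintype ι]

variable (𝕜 ι) in
noncomputable def dotDiffForm : (ι → 𝕜) →ₗ[𝕜] ((ι → 𝕜) × (ι → 𝕜) →L[𝕜] 𝕜) :=
  Fintype.linearCombination 𝕜 fun i => (ContinuousLinearMap.proj i).comp
    (ContinuousLinearMap.fst 𝕜 (ι → 𝕜) (ι → 𝕜) - ContinuousLinearMap.snd 𝕜 (ι → 𝕜) (ι → 𝕜))

theorem dotDiffForm_apply (r : ι → 𝕜) (w : (ι → 𝕜) × (ι → 𝕜)) :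
    dotDiffForm 𝕜 ι r w = r ⬝ᵥ (w.1 - w.2) := by
  simp [dotDiffForm, Fintype.linearCombination_apply, dotProduct]

theorem dotDiffForm_injective : Function.Injective (dotDiffForm 𝕜 ι) := by
  classical
  intro r s h
  funext l
  simpa [dotDiffForm_apply] using DFunLike.congr_fun h (Pi.single l 1, 0)

theorem hasFDerivAt_sum_mul_sub {a : ι → (ι → 𝕜) × (ι → 𝕜) → 𝕜} {x : ι → 𝕜}
    (ha : ∀ i, DifferentiableAt 𝕜 (a i) (x, x)) :
    HasFDerivAt (fun w => ∑ i, a i w * (w.1 i - w.2 i))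
      (dotDiffForm 𝕜 ι fun i => a i (x, x)) (x, x) := by
  have := HasFDerivAt.fun_sum (u := Finset.univ) fun i _ => (ha i).hasFDerivAt.mul
    ((ContinuousLinearMap.proj i).comp (ContinuousLinearMap.fst 𝕜 (ι → 𝕜) (ι → 𝕜) -
      ContinuousLinearMap.snd 𝕜 (ι → 𝕜) (ι → 𝕜))).hasFDerivAt
  refine this.congr_fderiv (ContinuousLinearMap.ext fun v => ?_)
  simp [dotDiffForm_apply, dotProduct]

theorem AnalyticAt.apply_fst_sub_apply_snd {E κ : Type*} [NormedAddCommGroup E]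
    [NormedSpace 𝕜 E] [Fintype κ] {g : E → κ → 𝕜} {x : E} (hg : AnalyticAt 𝕜 g x) (j : κ) :
    AnalyticAt 𝕜 (fun w : E × E => g w.1 j - g w.2 j) (x, x) := by
  have hfst : AnalyticAt 𝕜 (fun w : E × E => g w.1) (x, x) := hg.comp analyticAt_fst
  have hsnd : AnalyticAt 𝕜 (fun w : E × E => g w.2) (x, x) := hg.comp analyticAt_snd
  exact (analyticAt_pi_iff.mp hfst j).sub (analyticAt_pi_iff.mp hsnd j)

theorem mulVecLin_eq_fderiv {κ : Type*} [Fintype κ] {f : (ι → 𝕜) → (κ → 𝕜)} {x : ι → 𝕜}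
    (hf : DifferentiableAt 𝕜 f x) {A : Matrix κ ι 𝕜}
    (hA : ∀ j, HasFDerivAt (fun w : (ι → 𝕜) × (ι → 𝕜) => f w.1 j - f w.2 j)
      (dotDiffForm 𝕜 ι (A j)) (x, x)) :
    A.mulVecLin = (fderiv 𝕜 f x : (ι → 𝕜) →ₗ[𝕜] (κ → 𝕜)) := by
  have hdiff : HasFDerivAt (fun w : (ι → 𝕜) × (ι → 𝕜) => f w.1 - f w.2)
      ((fderiv 𝕜 f x).comp (ContinuousLinearMap.fst 𝕜 (ι → 𝕜) (ι → 𝕜)) -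
        (fderiv 𝕜 f x).comp (ContinuousLinearMap.snd 𝕜 (ι → 𝕜) (ι → 𝕜))) (x, x) :=
    (hf.hasFDerivAt.comp (x, x) hasFDerivAt_fst).sub (hf.hasFDerivAt.comp (x, x) hasFDerivAt_snd)
  refine LinearMap.ext fun v => funext fun j => ?_
  have := DFunLike.congr_fun ((hasFDerivAt_pi'.mp hdiff j).unique (hA j)) (v, 0)
  simpa [dotDiffForm_apply, Matrix.mulVec] using this.symm

end DoublePoints

section LinearParts

variable {E : Type*} [NormedAddCommGroup E] [NormedSpace ℂ E]

noncomputable def fderivMemIdeal (z : E) (V : Submodule ℂ (E →L[ℂ] ℂ)) :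
    Ideal (analyticGerms E z) where
  carrier := {γ | ∃ g : E → ℂ, AnalyticAt ℂ g z ∧ (γ : Germ (𝓝 z) ℂ) = g ∧ g z = 0 ∧
    fderiv ℂ g z ∈ V}
  zero_mem' := ⟨0, analyticAt_const, rfl, rfl, by simp⟩
  add_mem' := by
    rintro _ _ ⟨g, hg, hγ, hg0, hgV⟩ ⟨h, hh, hδ, hh0, hhV⟩
    refine ⟨g + h, hg.add hh, ?_, by simp [hg0, hh0], ?_⟩
    · simp only [Subring.coe_add, hγ, hδ, Germ.coe_add]
    · rw [fderiv_add hg.differentiableAt hh.differentiableAt]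
      exact V.add_mem hgV hhV
  smul_mem' := by
    rintro ⟨_, ρ, hρ, rfl⟩ _ ⟨g, hg, hγ, hg0, hgV⟩
    refine ⟨ρ * g, hρ.mul hg, ?_, by simp [hg0], ?_⟩
    · simp only [smul_eq_mul, Subring.coe_mul, hγ, Germ.coe_mul]
    · rw [fderiv_mul hρ.differentiableAt hg.differentiableAt, hg0]
      exact V.add_mem (V.smul_mem _ hgV) (zero_smul ℂ (fderiv ℂ ρ z) ▸ V.zero_mem)

theorem fderiv_mem_of_mem_fderivMemIdeal {z : E} {V : Submodule ℂ (E →L[ℂ] ℂ)}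
    {γ : analyticGerms E z} (hγ : γ ∈ fderivMemIdeal z V) {g : E → ℂ}
    (hg : (γ : Germ (𝓝 z) ℂ) = g) : fderiv ℂ g z ∈ V := by
  obtain ⟨h, -, hγh, -, hhV⟩ := hγ
  rwa [(Germ.coe_eq.mp (hg.symm.trans hγh)).fderiv_eq]

theorem linearParts_le {n : ℕ} {I : Ideal (analyticGerms ((Fin n → ℂ) × (Fin n → ℂ)) (0, 0))}
    {V : Submodule ℂ (((Fin n → ℂ) × (Fin n → ℂ)) →L[ℂ] ℂ)}
    (hI : I ≤ fderivMemIdeal (0, 0) V) : linearParts n I ≤ V :=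
  Submodule.span_le.mpr fun _ ⟨_, hγ, _, _, hγg, hL⟩ =>
    hL ▸ fderiv_mem_of_mem_fderivMemIdeal (hI hγ) hγg

theorem fderiv_mem_linearParts {n : ℕ}
    {I : Ideal (analyticGerms ((Fin n → ℂ) × (Fin n → ℂ)) (0, 0))}
    {g : (Fin n → ℂ) × (Fin n → ℂ) → ℂ} (hg : AnalyticAt ℂ g (0, 0))
    (hgI : ⟨g, g, hg, rfl⟩ ∈ I) : fderiv ℂ g (0, 0) ∈ linearParts n I :=
  Submodule.subset_span ⟨_, hgI, g, hg, rfl, rfl⟩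

end LinearParts

theorem linearParts_mondDoubleIdeal {n p : ℕ} {f : (Fin n → ℂ) → (Fin p → ℂ)}
    {α : Fin p → Fin n → ((Fin n → ℂ) × (Fin n → ℂ)) → ℂ} (hf : AnalyticAt ℂ f 0)
    (hα : ∀ j i, AnalyticAt ℂ (α j i) (0, 0))
    (hderiv : ∀ j, HasFDerivAt (fun w : (Fin n → ℂ) × (Fin n → ℂ) => f w.1 j - f w.2 j)
      (dotDiffForm ℂ (Fin n) fun i => α j i (0, 0)) (0, 0))
    (hrank : (Matrix.of fun j i => α j i (0, 0)).rank + 2 ≤ n) :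
    linearParts n (mondDoubleIdeal n p f α) =
      (Submodule.span ℂ (Set.range (Matrix.of fun j i => α j i (0, 0)).row)).map
        (dotDiffForm ℂ (Fin n)) := by
  set W := Submodule.span ℂ (Set.range (Matrix.of fun j i => α j i (0, 0)).row)
  refine le_antisymm (linearParts_le <| Ideal.span_le.mpr ?_) ?_
  · rintro γ (⟨j, hγ⟩ | ⟨rows, -, hγ⟩)
    · refine ⟨_, hf.apply_fst_sub_apply_snd j, hγ, sub_self _, ?_⟩
      rw [(hderiv j).fderiv]
      exact Submodule.mem_map_of_mem (Submodule.subset_span ⟨j, rfl⟩)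
    · have hR : AnalyticAt ℂ (fun w i i' => α (rows i) i' w) (0, 0) :=
        AnalyticAt.pi fun i => AnalyticAt.pi fun i' => hα _ _
      have hW : ∀ i, (fun i' => α (rows i) i' (0, 0)) ∈ W :=
        fun i => Submodule.subset_span ⟨rows i, rfl⟩
      have hd : finrank ℂ W + 2 ≤ Fintype.card (Fin n) := by
        rwa [← Matrix.rank_eq_finrank_span_row, Fintype.card_fin]
      refine ⟨_, hR.matrix_det_of, hγ, ?_, ?_⟩
      · exact Matrix.det_eq_zero_of_forall_ne_mem _ W ⟨0, by omega⟩ (fun l _ => hW l) (by omega)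
      · rw [(hasFDerivAt_matrix_det_zero_of_forall_mem hR.differentiableAt W hW hd).fderiv]
        exact Submodule.zero_mem _
  · rw [Submodule.map_span, Submodule.span_le]
    rintro _ ⟨_, ⟨j, rfl⟩, rfl⟩
    have := fderiv_mem_linearParts (I := mondDoubleIdeal n p f α) (hf.apply_fst_sub_apply_snd j)
      (Ideal.subset_span (Or.inl ⟨j, rfl⟩))
    rwa [(hderiv j).fderiv] at this

theorem edim_doublePointSpace_of_corank_general (n p k : ℕ) (hk2 : 2 ≤ k) (hkn : k ≤ n)
    (f : (Fin n → ℂ) → (Fin p → ℂ)) (hf : AnalyticAt ℂ f 0)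
    (hcorank : Module.finrank ℂ (LinearMap.range
        ((fderiv ℂ f 0 : (Fin n → ℂ) →L[ℂ] (Fin p → ℂ)) :
          (Fin n → ℂ) →ₗ[ℂ] (Fin p → ℂ))) = n - k)
    (α : Fin p → Fin n → ((Fin n → ℂ) × (Fin n → ℂ)) → ℂ)
    (hα : ∀ j i, AnalyticAt ℂ (α j i) (0, 0))
    (hrelα : ∀ᶠ w : (Fin n → ℂ) × (Fin n → ℂ) in nhds (0, 0),
      ∀ j, f w.1 j - f w.2 j = ∑ i, α j i w * (w.1 i - w.2 i)) :
    (2 * n : ℤ) - Module.finrank ℂ (linearParts n (mondDoubleIdeal n p f α)) = n + k := by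
  have hderiv (j : Fin p) : HasFDerivAt (fun w : (Fin n → ℂ) × (Fin n → ℂ) => f w.1 j - f w.2 j)
      (dotDiffForm ℂ (Fin n) fun i => α j i (0, 0)) (0, 0) :=
    (hasFDerivAt_sum_mul_sub fun i => (hα j i).differentiableAt).congr_of_eventuallyEq
      (hrelα.mono fun w hw => hw j)
  have hrank : (Matrix.of fun j i => α j i (0, 0)).rank = n - k := by
    rw [Matrix.rank, mulVecLin_eq_fderiv (A := Matrix.of fun j i => α j i (0, 0))
      hf.differentiableAt hderiv, hcorank]
  rw [linearParts_mondDoubleIdeal hf hα hderiv (by omega),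
    ← (Submodule.equivMapOfInjective _ dotDiffForm_injective _).finrank_eq,
    ← Matrix.rank_eq_finrank_span_row, hrank]
  omega

/-- Let `f : (ℂⁿ,0) → (ℂᵖ,0)` be a finite holomorphic map germ with `corank f = k ≥ 2`
and `n ≤ p`. Then the embedding dimension of the double point space `D²(f) = V(I²(f))`,
namely `2n` minus the dimension of the space of linear parts of elements of `I²(f)`,
equals `n + k`. -/
theorem edim_doublePointSpace_of_corank (n p k : ℕ) (hnp : n ≤ p) (hk2 : 2 ≤ k) (hkn : k ≤ n)
    (f : (Fin n → ℂ) → (Fin p → ℂ)) (hf : AnalyticAt ℂ f 0) (hf0 : f 0 = 0)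
    (hfin : ∃ U ∈ nhds (0 : Fin n → ℂ), ∀ y : Fin p → ℂ, {x ∈ U | f x = y}.Finite)
    (hcorank : Module.finrank ℂ (LinearMap.range
        ((fderiv ℂ f 0 : (Fin n → ℂ) →L[ℂ] (Fin p → ℂ)) :
          (Fin n → ℂ) →ₗ[ℂ] (Fin p → ℂ))) = n - k)
    (α : Fin p → Fin n → ((Fin n → ℂ) × (Fin n → ℂ)) → ℂ)
    (hα : ∀ j i, AnalyticAt ℂ (α j i) (0, 0))
    (hrelα : ∀ᶠ w : (Fin n → ℂ) × (Fin n → ℂ) in nhds (0, 0),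
      ∀ j, f w.1 j - f w.2 j = ∑ i, α j i w * (w.1 i - w.2 i)) :
    (2 * n : ℤ) - Module.finrank ℂ (linearParts n (mondDoubleIdeal n p f α)) = n + k :=
  edim_doublePointSpace_of_corank_general n p k hk2 hkn f hf hcorank α hα hrelα
end

section
/- Let f : (C^n,0) → (C^p,0) be a finite map germ of rank r of the form f(s,x) = (s, f_s(x)), s ∈ C^r, x ∈ C^{n-r}. Then the projection C^{nk} → C^r × C^{k(n-r)} forgetting the variables s^{(2)},…,s^{(k)} restricts to a bijection from the closure of the strict k-multiple points of f onto the closure of the set {(s,w) : w is a strict k-multiple point of f_s}. -/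
/-!
Since `f (s, x) = (s, f_s x)`, the `k` points of a strict multiple point of `f` share their
parameter `s`, so the strict multiple points of `f` are the image of those of the family
`(s, w)` under `(s, w) ↦ ((s, w₁), …, (s, w_k))`. This map is a closed embedding with the
projection as a continuous left inverse, hence it commutes with closures and the projection
inverts it on the image of the closure.
-/

open Set Function

variable {ι S X Y : Type*}

def strictMultiplePoints (f : X → Y) (ι : Type*) : Set (ι → X) :=
  {w | Injective w ∧ ∀ l l', f (w l) = f (w l')}

def unfolding (g : S → X → Y) : S × X → S × Y :=
  fun p => (p.1, g p.1 p.2)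

def withCommonFst (z : S × (ι → X)) : ι → S × X :=
  fun l => (z.1, z.2 l)

def splitAt (i₀ : ι) (w : ι → S × X) : S × (ι → X) :=
  ((w i₀).1, fun l => (w l).2)

theorem splitAt_leftInverse_withCommonFst (i₀ : ι) :
    LeftInverse (splitAt (S := S) (X := X) i₀) withCommonFst :=
  fun _ => rfl

theorem isClosedEmbedding_withCommonFst [TopologicalSpace S] [TopologicalSpace X]
    [T2Space S] [T2Space X] [Nonempty ι] :
    Topology.IsClosedEmbedding (withCommonFst (ι := ι) (S := S) (X := X)) :=
  (splitAt_leftInverse_withCommonFst (Classical.arbitrary ι)).isClosedEmbedding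
    (by unfold splitAt; fun_prop) (by unfold withCommonFst; fun_prop)

theorem fst_eq_of_mem_strictMultiplePoints_unfolding {g : S → X → Y} {w : ι → S × X}
    (hw : w ∈ strictMultiplePoints (unfolding g) ι) (l l' : ι) : (w l).1 = (w l').1 := by
  have h := congrArg Prod.fst (hw.2 l l')
  exact h

theorem strictMultiplePoints_unfolding [Nonempty ι] (g : S → X → Y) :
    strictMultiplePoints (unfolding g) ι =
      withCommonFst '' {z | z.2 ∈ strictMultiplePoints (g z.1) ι} := by
  ext w
  constructor
  · intro hw
    obtain ⟨i₀⟩ := ‹Nonempty ι›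
    have hfst := fst_eq_of_mem_strictMultiplePoints_unfolding hw
    have hw_eq : withCommonFst (splitAt i₀ w) = w :=
      funext fun l => Prod.ext (hfst i₀ l) rfl
    refine ⟨splitAt i₀ w, ⟨fun l l' h => hw.1 (Prod.ext (hfst l l') h), fun l l' => ?_⟩, hw_eq⟩
    have hg := congrArg Prod.snd (hw.2 l l')
    simp only [unfolding, ← hfst i₀ l, ← hfst i₀ l'] at hg
    exact hg
  · rintro ⟨z, ⟨hinj, hg⟩, rfl⟩
    refine ⟨fun l l' h => hinj (congrArg Prod.snd h), fun l l' => ?_⟩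
    simp only [unfolding, withCommonFst, hg l l']

theorem bijOn_splitAt_image_withCommonFst (i₀ : ι) (T : Set (S × (ι → X))) :
    BijOn (splitAt i₀) (withCommonFst '' T) T := by
  have hinv := splitAt_leftInverse_withCommonFst (S := S) (X := X) i₀
  exact hinv.injective.bijOn_image.symm
    ⟨fun _ ⟨z, _, hz⟩ => hz ▸ congrArg withCommonFst (hinv z), fun z _ => hinv z⟩

theorem bijOn_splitAt_closure_strictMultiplePoints_unfolding [TopologicalSpace S]
    [TopologicalSpace X] [T2Space S] [T2Space X] (g : S → X → Y) (i₀ : ι) :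
    BijOn (splitAt i₀) (closure (strictMultiplePoints (unfolding g) ι))
      (closure {z | z.2 ∈ strictMultiplePoints (g z.1) ι}) := by
  have : Nonempty ι := ⟨i₀⟩
  rw [strictMultiplePoints_unfolding, isClosedEmbedding_withCommonFst.closure_image_eq]
  exact bijOn_splitAt_image_withCommonFst i₀ _

/-- Let `f(s,x) = (s, f_s(x))`, `s ∈ ℂʳ`, `x ∈ ℂᵐ`, be a finite holomorphic map (of
rank `r`). Then the projection forgetting the parameters `s⁽²⁾,…,s⁽ᵏ⁾` restricts to a
bijection from the closure of the strict `k`-multiple points of `f` onto the closure of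
the set `{(s,w) : w is a strict k-multiple point of f_s}`. -/
theorem projection_bijOn_strict_multiple_points (r m q k : ℕ) (hk : 2 ≤ k)
    (g : (Fin r → ℂ) → (Fin m → ℂ) → (Fin q → ℂ))
    (f : (Fin r → ℂ) × (Fin m → ℂ) → (Fin r → ℂ) × (Fin q → ℂ))
    (hfg : ∀ s x, f (s, x) = (s, g s x)) :
    Set.BijOn
      (fun w : Fin k → (Fin r → ℂ) × (Fin m → ℂ) => ((w ⟨0, by omega⟩).1, fun l => (w l).2))
      (closure {w : Fin k → (Fin r → ℂ) × (Fin m → ℂ) |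
        Function.Injective w ∧ ∀ l l', f (w l) = f (w l')})
      (closure {z : (Fin r → ℂ) × (Fin k → Fin m → ℂ) |
        Function.Injective z.2 ∧ ∀ l l', g z.1 (z.2 l) = g z.1 (z.2 l')}) := by
  obtain rfl : f = unfolding g := funext fun p => hfg p.1 p.2
  exact bijOn_splitAt_closure_strictMultiplePoints_unfolding g (⟨0, by omega⟩ : Fin k)
end
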